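/- Given real parameters α, and smooth functions f,g,m,n,ℓ of x₃, define H = J₁²+J₂²+(3α²+f)J₃²+m x₁+g and K = −2αJ₃(−α²J₃²+J₁²+J₂²+fJ₃²+g) − nJ₁ − ℓx₁J₃. If g = d/n², m = −n′/α, ℓ = nn″/n′, f = 1−3α² − α(3x₃m−2(a²−x₃²)m′)/n + (x₃ℓ−(a²−x₃²)ℓ′)/n, and n satisfies the fourth-order ODE 24α²−9 = 15(x₃n′−n″(a²−x₃²))/n + (3x₃n″−n‴(a²−x₃²))/n′·(9−nn″/(n′)²) + n(5x₃n‴−n⁗(a²−x₃²)+3n″)/(n′)², then {H,K} = 0 on the level set x₁²+x₂²+x₃² = a², x₁J₁+x₂J₂+x₃J₃ = 0. -/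

import Mathlib

open scoped BigOperators

/-- Index of `x_i` (i = 0,1,2) in phase space `ℝ⁶ = Fin 6 → ℝ`. -/
def xIdx (i : Fin 3) : Fin 6 := ⟨i.1, by omega⟩
/-- Index of `J_i` (i = 0,1,2) in phase space. -/
def jIdx (i : Fin 3) : Fin 6 := ⟨i.1 + 3, by omega⟩

/-- Partial derivative of `F` in the `i`-th coordinate direction. -/
noncomputable def pd (i : Fin 6) (F : (Fin 6 → ℝ) → ℝ) (z : Fin 6 → ℝ) : ℝ :=
  fderiv ℝ F z (Pi.single i 1)

/-- Levi-Civita symbol on `Fin 3`. -/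
def eps (i j k : Fin 3) : ℝ :=
  if (i,j,k) = (0,1,2) ∨ (i,j,k) = (1,2,0) ∨ (i,j,k) = (2,0,1) then 1
  else if (i,j,k) = (1,0,2) ∨ (i,j,k) = (2,1,0) ∨ (i,j,k) = (0,2,1) then -1
  else 0

/-- The e(3) Poisson bracket on smooth functions of `(x, J) ∈ ℝ⁶`, generated by
`{J_i,J_j} = ε_{ijk} J_k`, `{J_i,x_j} = ε_{ijk} x_k`, `{x_i,x_j} = 0`. -/
noncomputable def e3Bracket (F G : (Fin 6 → ℝ) → ℝ) (z : Fin 6 → ℝ) : ℝ :=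
  ∑ i : Fin 3, ∑ j : Fin 3, ∑ k : Fin 3, eps i j k *
    ( z (jIdx k) * pd (jIdx i) F z * pd (jIdx j) G z
    + z (xIdx k) * pd (jIdx i) F z * pd (xIdx j) G z
    + z (xIdx k) * pd (xIdx i) F z * pd (jIdx j) G z )

/-- The right-hand side of the fourth-order differential equation (meq) of the paper:
`15(x₃n′−n″(a²−x₃²))/n + (3x₃n″−n‴(a²−x₃²))/n′·(9−nn″/(n′)²)
 + n(5x₃n‴−n⁗(a²−x₃²)+3n″)/(n′)²`. -/
noncomputable def odeRHS (a : ℝ) (n : ℝ → ℝ) (t : ℝ) : ℝ :=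
  15 * (t * deriv n t - (deriv^[2] n t) * (a^2 - t^2)) / n t
  + (3*t*(deriv^[2] n t) - (deriv^[3] n t) * (a^2 - t^2)) / deriv n t
      * (9 - n t * (deriv^[2] n t) / (deriv n t)^2)
  + n t * (5*t*(deriv^[3] n t) - (deriv^[4] n t) * (a^2 - t^2) + 3*(deriv^[2] n t))
      / (deriv n t)^2


section PdLemmas

variable {F G : (Fin 6 → ℝ) → ℝ} {z : Fin 6 → ℝ}

theorem pd_const (i : Fin 6) (c : ℝ) : pd i (fun _ => c) z = 0 := by
  simp [pd]

theorem pd_add (i : Fin 6) (hF : DifferentiableAt ℝ F z) (hG : DifferentiableAt ℝ G z) :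
    pd i (fun w => F w + G w) z = pd i F z + pd i G z := by
  simp only [pd, fderiv_fun_add hF hG, ContinuousLinearMap.add_apply]

theorem pd_sub (i : Fin 6) (hF : DifferentiableAt ℝ F z) (hG : DifferentiableAt ℝ G z) :
    pd i (fun w => F w - G w) z = pd i F z - pd i G z := by
  simp only [pd, fderiv_fun_sub hF hG, ContinuousLinearMap.sub_apply]

theorem pd_mul (i : Fin 6) (hF : DifferentiableAt ℝ F z) (hG : DifferentiableAt ℝ G z) :
    pd i (fun w => F w * G w) z = F z * pd i G z + G z * pd i F z := by
  simp only [pd, fderiv_fun_mul hF hG, ContinuousLinearMap.add_apply,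
    ContinuousLinearMap.smul_apply, smul_eq_mul]

theorem pd_pow (i : Fin 6) (k : ℕ) (hF : DifferentiableAt ℝ F z) :
    pd i (fun w => F w ^ k) z = k * F z ^ (k-1) * pd i F z := by
  have h := (hasDerivAt_pow k (F z)).comp_hasFDerivAt z hF.hasFDerivAt
  simp only [pd]
  rw [show (fun w => F w ^ k) = (fun x : ℝ => x ^ k) ∘ F from rfl, h.fderiv]
  simp [mul_assoc]

theorem pd_coord (i k : Fin 6) : pd i (fun w : Fin 6 → ℝ => w k) z = if k = i then 1 else 0 := by
  simp only [pd]
  rw [(hasFDerivAt_apply k z).fderiv]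
  simp [Pi.single_apply]

theorem pd_comp (i k : Fin 6) (φ : ℝ → ℝ) (hφ : DifferentiableAt ℝ φ (z k)) :
    pd i (fun w => φ (w k)) z = deriv φ (z k) * (if k = i then 1 else 0) := by
  have h := hφ.hasDerivAt.comp_hasFDerivAt z (hasFDerivAt_apply (𝕜 := ℝ) k z)
  simp only [pd]
  rw [show (fun w : Fin 6 → ℝ => φ (w k)) = φ ∘ (fun w : Fin 6 → ℝ => w k) from rfl, h.fderiv]
  simp [Pi.single_apply]

end PdLemmas

set_option maxHeartbeats 4000000 in
/-- General integrability criterion (Theorem 1 of the paper): if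
`g = d/n²`, `m = −n′/α`, `ℓ = nn″/n′`,
`f = 1−3α² − α(3x₃m−2(a²−x₃²)m′)/n + (x₃ℓ−(a²−x₃²)ℓ′)/n`
and `n` solves the fourth order ODE (meq), then
`H = J₁²+J₂²+(3α²+f)J₃²+m x₁+g` and
`K = −2αJ₃(−α²J₃²+J₁²+J₂²+fJ₃²+g) − nJ₁ − ℓx₁J₃`
are in involution on the level set `x₁²+x₂²+x₃² = a²`, `x·J = 0`. -/
theorem general_cubic_integrable (a α d : ℝ) (hα : α ≠ 0)
    (s : Set ℝ) (hs : IsOpen s)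
    (n m ℓ g f : ℝ → ℝ)
    (hn : ContDiff ℝ (⊤ : ℕ∞) n) (hm : ContDiff ℝ (⊤ : ℕ∞) m) (hℓ : ContDiff ℝ (⊤ : ℕ∞) ℓ)
    (hgc : ContDiff ℝ (⊤ : ℕ∞) g) (hfc : ContDiff ℝ (⊤ : ℕ∞) f)
    (hn0 : ∀ t ∈ s, n t ≠ 0) (hn'0 : ∀ t ∈ s, deriv n t ≠ 0)
    (hg : ∀ t ∈ s, g t = d / (n t)^2)
    (hm' : ∀ t ∈ s, m t = -(deriv n t) / α)
    (hℓ' : ∀ t ∈ s, ℓ t = n t * (deriv^[2] n t) / deriv n t)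
    (hf : ∀ t ∈ s, f t = 1 - 3*α^2
        - α * (3*t*(m t) - 2*(a^2 - t^2)*(deriv m t)) / n t
        + (t*(ℓ t) - (a^2 - t^2)*(deriv ℓ t)) / n t)
    (hode : ∀ t ∈ s, 24*α^2 - 9 = odeRHS a n t)
    (H K : (Fin 6 → ℝ) → ℝ)
    (hH : H = fun z => (z (jIdx 0))^2 + (z (jIdx 1))^2
        + (3*α^2 + f (z (xIdx 2))) * (z (jIdx 2))^2
        + m (z (xIdx 2)) * z (xIdx 0) + g (z (xIdx 2)))
    (hK : K = fun z => -2*α*(z (jIdx 2)) *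
          (-(α^2)*(z (jIdx 2))^2 + (z (jIdx 0))^2 + (z (jIdx 1))^2
            + f (z (xIdx 2)) * (z (jIdx 2))^2 + g (z (xIdx 2)))
        - n (z (xIdx 2)) * z (jIdx 0)
        - ℓ (z (xIdx 2)) * z (xIdx 0) * z (jIdx 2)) :
    ∀ z : Fin 6 → ℝ, z (xIdx 2) ∈ s →
      (z (xIdx 0))^2 + (z (xIdx 1))^2 + (z (xIdx 2))^2 = a^2 →
      z (xIdx 0) * z (jIdx 0) + z (xIdx 1) * z (jIdx 1) + z (xIdx 2) * z (jIdx 2) = 0 →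
      e3Bracket H K z = 0 := by
  intro z hzs hA hB
  subst hH hK
  have hN0 : n (z (xIdx 2)) ≠ 0 := hn0 _ hzs
  have hN1 : deriv n (z (xIdx 2)) ≠ 0 := hn'0 _ hzs
  have hnd : Differentiable ℝ n := hn.differentiable (by simp)
  have hmd : Differentiable ℝ m := hm.differentiable (by simp)
  have hld : Differentiable ℝ ℓ := hℓ.differentiable (by simp)
  have hgd : Differentiable ℝ g := hgc.differentiable (by simp)
  have hfd : Differentiable ℝ f := hfc.differentiable (by simp)
  have DI : ∀ (k : ℕ) (u : ℝ), HasDerivAt (deriv^[k] n) (deriv^[k+1] n u) u := by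
    intro k u
    have h : DifferentiableAt ℝ (deriv^[k] n) u :=
      (((hn.of_le (by simp)).iterate_deriv k).differentiable (by simp)).differentiableAt
    rw [show deriv^[k+1] n u = deriv (deriv^[k] n) u from by rw [Function.iterate_succ_apply']]
    exact h.hasDerivAt
  have D0 : ∀ u : ℝ, HasDerivAt n (deriv n u) u := fun u => (hnd u).hasDerivAt
  have D1 : ∀ u : ℝ, HasDerivAt (deriv n) (deriv^[2] n u) u := fun u => by simpa using DI 1 u
  have D2 : ∀ u : ℝ, HasDerivAt (deriv^[2] n) (deriv^[3] n u) u := fun u => by simpa using DI 2 u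
  have D3 : ∀ u : ℝ, HasDerivAt (deriv^[3] n) (deriv^[4] n u) u := fun u => by simpa using DI 3 u
  have Dm : ∀ u : ℝ, HasDerivAt m (deriv m u) u := fun u => (hmd u).hasDerivAt
  have Dl : ∀ u : ℝ, HasDerivAt ℓ (deriv ℓ u) u := fun u => (hld u).hasDerivAt
  have Dm1 : ∀ u : ℝ, HasDerivAt (deriv m) (deriv (deriv m) u) u := fun u =>
    (((contDiff_infty_iff_deriv.mp (hm.of_le (by simp))).2.differentiable
      (by simp)) u).hasDerivAt
  have Dl1 : ∀ u : ℝ, HasDerivAt (deriv ℓ) (deriv (deriv ℓ) u) u := fun u =>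
    (((contDiff_infty_iff_deriv.mp (hℓ.of_le (by simp))).2.differentiable
      (by simp)) u).hasDerivAt
  have EV : ∀ {F G : ℝ → ℝ}, (∀ u ∈ s, F u = G u) → ∀ u ∈ s, deriv F u = deriv G u :=
    fun h u hu => Filter.EventuallyEq.deriv_eq (Filter.eventuallyEq_of_mem (hs.mem_nhds hu) h)
  have hgt : g (z (xIdx 2)) = d / (n (z (xIdx 2)))^2 := hg _ hzs
  have hg't : deriv g (z (xIdx 2)) = -(2*d*(deriv n (z (xIdx 2)))) / (n (z (xIdx 2)))^3 := by
    rw [EV hg _ hzs]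
    refine (((hasDerivAt_const (z (xIdx 2)) d).div ((D0 (z (xIdx 2))).pow 2)
      (pow_ne_zero 2 hN0)).deriv).trans ?_
    simp only [Pi.pow_apply]
    field_simp
    ring
  have hmt : m (z (xIdx 2)) = -(deriv n (z (xIdx 2))) / α := hm' _ hzs
  have hm'u : ∀ u ∈ s, deriv m u = -(deriv^[2] n u) / α := by
    intro u hu
    rw [EV hm' u hu]
    exact (((D1 u).neg).div_const α).deriv
  have hm't : deriv m (z (xIdx 2)) = -(deriv^[2] n (z (xIdx 2))) / α := hm'u _ hzs
  have hm''t : deriv (deriv m) (z (xIdx 2)) = -(deriv^[3] n (z (xIdx 2))) / α := by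
    rw [EV hm'u _ hzs]
    exact (((D2 (z (xIdx 2))).neg).div_const α).deriv
  have hlt : ℓ (z (xIdx 2)) = n (z (xIdx 2)) * deriv^[2] n (z (xIdx 2)) / deriv n (z (xIdx 2)) :=
    hℓ' _ hzs
  have hl'u : ∀ u ∈ s, deriv ℓ u =
      ((deriv n u * deriv^[2] n u + n u * deriv^[3] n u) * deriv n u
        - n u * deriv^[2] n u * deriv^[2] n u) / deriv n u ^ 2 := by
    intro u hu
    rw [EV hℓ' u hu]
    exact (((D0 u).mul (D2 u)).div (D1 u) (hn'0 u hu)).deriv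
  have hl't : deriv ℓ (z (xIdx 2)) =
      (((deriv n (z (xIdx 2))) * (deriv^[2] n (z (xIdx 2))) + (n (z (xIdx 2))) * (deriv^[3] n (z (xIdx 2)))) * (deriv n (z (xIdx 2))) - (n (z (xIdx 2))) * (deriv^[2] n (z (xIdx 2))) * (deriv^[2] n (z (xIdx 2)))) / (deriv n (z (xIdx 2))) ^ 2 := hl'u _ hzs
  have hl''t : deriv (deriv ℓ) (z (xIdx 2)) = ((-1)*(deriv n (z (xIdx 2)))^2*(deriv^[2] n (z (xIdx 2)))^2 + 2*(deriv n (z (xIdx 2)))^3*(deriv^[3] n (z (xIdx 2))) + 2*(n (z (xIdx 2)))*(deriv^[2] n (z (xIdx 2)))^3 + (-3)*(n (z (xIdx 2)))*(deriv n (z (xIdx 2)))*(deriv^[2] n (z (xIdx 2)))*(deriv^[3] n (z (xIdx 2))) + (n (z (xIdx 2)))*(deriv n (z (xIdx 2)))^2*(deriv^[4] n (z (xIdx 2)))) / ((deriv n (z (xIdx 2)))^3) := by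
    rw [EV hl'u _ hzs]
    have hnum := ((((D1 (z (xIdx 2))).mul (D2 (z (xIdx 2)))).add ((D0 (z (xIdx 2))).mul (D3 (z (xIdx 2))))).mul (D1 (z (xIdx 2)))).sub
      (((D0 (z (xIdx 2))).mul (D2 (z (xIdx 2)))).mul (D2 (z (xIdx 2))))
    refine ((hnum.div ((D1 (z (xIdx 2))).pow 2) (pow_ne_zero 2 hN1)).deriv).trans ?_
    simp only [Pi.pow_apply, Pi.mul_apply, Pi.add_apply, Pi.sub_apply, Pi.div_apply, Pi.neg_apply]
    field_simp
    ring
  have hft : f (z (xIdx 2)) = ((n (z (xIdx 2)))*(deriv n (z (xIdx 2)))^2 + (-3)*a^2*(deriv n (z (xIdx 2)))^2*(deriv^[2] n (z (xIdx 2))) + a^2*(n (z (xIdx 2)))*(deriv^[2] n (z (xIdx 2)))^2 + (-1)*a^2*(n (z (xIdx 2)))*(deriv n (z (xIdx 2)))*(deriv^[3] n (z (xIdx 2))) + (-3)*α^2*(n (z (xIdx 2)))*(deriv n (z (xIdx 2)))^2 + 3*(z (xIdx 2))*(deriv n (z (xIdx 2)))^3 + (z (xIdx 2))*(n (z (xIdx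 2)))*(deriv n (z (xIdx 2)))*(deriv^[2] n (z (xIdx 2))) + 3*(z (xIdx 2))^2*(deriv n (z (xIdx 2)))^2*(deriv^[2] n (z (xIdx 2))) + (-1)*(z (xIdx 2))^2*(n (z (xIdx 2)))*(deriv^[2] n (z (xIdx 2)))^2 + (z (xIdx 2))^2*(n (z (xIdx 2)))*(deriv n (z (xIdx 2)))*(deriv^[3] n (z (xIdx 2)))) / ((n (z (xIdx 2)))*(deriv n (z (xIdx 2)))^2) := by
    rw [hf _ hzs, hmt, hm't, hlt, hl't]
    field_simp
    ring
  have hf't : deriv f (z (xIdx 2)) = (3*(n (z (xIdx 2)))*(deriv n (z (xIdx 2)))^4 + (n (z (xIdx 2)))^2*(deriv n (z (xIdx 2)))^2*(deriv^[2] n (z (xIdx 2))) + 3*a^2*(deriv n (z (xIdx 2)))^4*(deriv^[2] n (z (xIdx 2))) + (-3)*a^2*(n (z (xIdx 2)))*(deriv n (z (xIdx 2)))^3*(deriv^[3] n (z (xIdx 2))) + (-2)*a^2*(n (z (xIdx 2)))^2*(deriv^[2] n (z (xIdx 2)))^3 + 3*a^2*(n (z (xIdx 2)))^2*(deriv n (z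 (xIdx 2)))*(deriv^[2] n (z (xIdx 2)))*(deriv^[3] n (z (xIdx 2))) + (-1)*a^2*(n (z (xIdx 2)))^2*(deriv n (z (xIdx 2)))^2*(deriv^[4] n (z (xIdx 2))) + (-3)*(z (xIdx 2))*(deriv n (z (xIdx 2)))^5 + 9*(z (xIdx 2))*(n (z (xIdx 2)))*(deriv n (z (xIdx 2)))^3*(deriv^[2] n (z (xIdx 2))) + (-3)*(z (xIdx 2))*(n (z (xIdx 2)))^2*(deriv n (z (xIdx 2)))*(deriv^[2] n (z (xIdx 2)))^2 + 3*(z (xIdx 2))*(n (z (xIdx 2)))^2*(deriv n (z (xIdx 2)))^2*(deriv^[3] n (z (xIdx 2))) + (-3)*(z (xIdx 2))^2*(deriv n (z (xIdx 2)))^4*(deriv^[2] n (z (xIdx 2))) + 3*(z (xIdx 2))^2*(n (z (xIdx 2)))*(deriv n (z (xIdx 2)))^3*(deriv^[3] n (z (xIdx 2))) + 2*(z (xIdx 2))^2*(n (z (xIdx 2)))^2*(deriv^[2] n (z (xIdx 2)))^3 + (-3)*(z (xIdx 2))^2*(n (z (xIdx 2)))^2*(deriv n (z (xIdx 2)))*(deriv^[2]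 n (z (xIdx 2)))*(deriv^[3] n (z (xIdx 2))) + (z (xIdx 2))^2*(n (z (xIdx 2)))^2*(deriv n (z (xIdx 2)))^2*(deriv^[4] n (z (xIdx 2)))) / ((n (z (xIdx 2)))^2*(deriv n (z (xIdx 2)))^3) := by
    rw [EV hf _ hzs]
    have hid : HasDerivAt (fun x : ℝ => x) 1 (z (xIdx 2)) := hasDerivAt_id' _
    have hT1 := ((hasDerivAt_const (z (xIdx 2)) α).mul
        ((((hasDerivAt_const (z (xIdx 2)) 3).mul hid).mul (Dm (z (xIdx 2)))).sub
          (((hasDerivAt_const (z (xIdx 2)) 2).mul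
            ((hasDerivAt_const (z (xIdx 2)) (a^2)).sub (hasDerivAt_pow 2 (z (xIdx 2))))).mul
            (Dm1 (z (xIdx 2)))))).div (D0 (z (xIdx 2))) hN0
    have hT2 := ((hid.mul (Dl (z (xIdx 2)))).sub
        (((hasDerivAt_const (z (xIdx 2)) (a^2)).sub (hasDerivAt_pow 2 (z (xIdx 2)))).mul
          (Dl1 (z (xIdx 2))))).div (D0 (z (xIdx 2))) hN0
    have hD := ((hasDerivAt_const (z (xIdx 2)) (1 - 3*α^2)).sub hT1).add hT2
    refine hD.deriv.trans ?_
    simp only [Pi.pow_apply, Pi.mul_apply, Pi.add_apply, Pi.sub_apply, Pi.div_apply, Pi.neg_apply]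
    rw [hmt, hm't, hm''t, hlt, hl't, hl''t]
    field_simp
    ring
  have hzero : (-(2*(z (jIdx 1))*(z (jIdx 2))*(3*(deriv n (z (xIdx 2)))^2*(deriv^[2] n (z (xIdx 2))) - (n (z (xIdx 2)))*(deriv^[2] n (z (xIdx 2)))^2 + (n (z (xIdx 2)))*(deriv n (z (xIdx 2)))*(deriv^[3] n (z (xIdx 2))))/(deriv n (z (xIdx 2)))^2))
        * ((z (xIdx 0))^2 + (z (xIdx 1))^2 + (z (xIdx 2))^2 - a^2)
      + (-2*(z (jIdx 1))*(deriv n (z (xIdx 2))) + 2*(z (xIdx 1))*(z (jIdx 2))*(3*(deriv n (z (xIdx 2)))^2*(deriv^[2] n (z (xIdx 2))) - (n (z (xIdx 2)))*(deriv^[2] n (z (xIdx 2)))^2 + (n (z (xIdx 2)))*(deriv n (z (xIdx 2)))*(deriv^[3] n (z (xIdx 2))))/(deriv n (z (xIdx 2)))^2)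
        * (z (xIdx 0) * z (jIdx 0) + z (xIdx 1) * z (jIdx 1) + z (xIdx 2) * z (jIdx 2))
      + ((z (xIdx 1))*(z (jIdx 2))^2*(deriv n (z (xIdx 2))))
        * (24*α^2 - 9 - odeRHS a n (z (xIdx 2))) = 0 := by
    rw [hA, hB, hode _ hzs]
    ring
  have pdH0 : pd (jIdx 0) (fun z => (z (jIdx 0))^2 + (z (jIdx 1))^2
        + (3*α^2 + f (z (xIdx 2))) * (z (jIdx 2))^2
        + m (z (xIdx 2)) * z (xIdx 0) + g (z (xIdx 2))) z = 2 * z (jIdx 0) := by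
    simp (disch := fun_prop) only [pd_add, pd_sub, pd_mul, pd_pow, pd_comp, pd_coord, pd_const]
    simp (config := { decide := true })
    all_goals ring
  have pdH1 : pd (jIdx 1) (fun z => (z (jIdx 0))^2 + (z (jIdx 1))^2
        + (3*α^2 + f (z (xIdx 2))) * (z (jIdx 2))^2
        + m (z (xIdx 2)) * z (xIdx 0) + g (z (xIdx 2))) z = 2 * z (jIdx 1) := by
    simp (disch := fun_prop) only [pd_add, pd_sub, pd_mul, pd_pow, pd_comp, pd_coord, pd_const]
    simp (config := { decide := true })
    all_goals ring
  have pdH2 : pd (jIdx 2) (fun z => (z (jIdx 0))^2 + (z (jIdx 1))^2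
        + (3*α^2 + f (z (xIdx 2))) * (z (jIdx 2))^2
        + m (z (xIdx 2)) * z (xIdx 0) + g (z (xIdx 2))) z = (3*α^2 + f (z (xIdx 2))) * (2 * z (jIdx 2)) := by
    simp (disch := fun_prop) only [pd_add, pd_sub, pd_mul, pd_pow, pd_comp, pd_coord, pd_const]
    simp (config := { decide := true })
    all_goals ring
  have pdH3 : pd (xIdx 0) (fun z => (z (jIdx 0))^2 + (z (jIdx 1))^2
        + (3*α^2 + f (z (xIdx 2))) * (z (jIdx 2))^2
        + m (z (xIdx 2)) * z (xIdx 0) + g (z (xIdx 2))) z = m (z (xIdx 2)) := by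
    simp (disch := fun_prop) only [pd_add, pd_sub, pd_mul, pd_pow, pd_comp, pd_coord, pd_const]
    simp (config := { decide := true })
    all_goals ring
  have pdH4 : pd (xIdx 1) (fun z => (z (jIdx 0))^2 + (z (jIdx 1))^2
        + (3*α^2 + f (z (xIdx 2))) * (z (jIdx 2))^2
        + m (z (xIdx 2)) * z (xIdx 0) + g (z (xIdx 2))) z = 0 := by
    simp (disch := fun_prop) only [pd_add, pd_sub, pd_mul, pd_pow, pd_comp, pd_coord, pd_const]
    simp (config := { decide := true })
    all_goals ring
  have pdH5 : pd (xIdx 2) (fun z => (z (jIdx 0))^2 + (z (jIdx 1))^2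
        + (3*α^2 + f (z (xIdx 2))) * (z (jIdx 2))^2
        + m (z (xIdx 2)) * z (xIdx 0) + g (z (xIdx 2))) z = deriv f (z (xIdx 2)) * (z (jIdx 2))^2 + deriv m (z (xIdx 2)) * z (xIdx 0) + deriv g (z (xIdx 2)) := by
    simp (disch := fun_prop) only [pd_add, pd_sub, pd_mul, pd_pow, pd_comp, pd_coord, pd_const]
    simp (config := { decide := true })
    all_goals ring
  have pdK0 : pd (jIdx 0) (fun z => -2*α*(z (jIdx 2)) *
          (-(α^2)*(z (jIdx 2))^2 + (z (jIdx 0))^2 + (z (jIdx 1))^2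
            + f (z (xIdx 2)) * (z (jIdx 2))^2 + g (z (xIdx 2)))
        - n (z (xIdx 2)) * z (jIdx 0)
        - ℓ (z (xIdx 2)) * z (xIdx 0) * z (jIdx 2)) z = -2*α*(z (jIdx 2)) * (2 * z (jIdx 0)) - n (z (xIdx 2)) := by
    simp (disch := fun_prop) only [pd_add, pd_sub, pd_mul, pd_pow, pd_comp, pd_coord, pd_const]
    simp (config := { decide := true })
    all_goals ring
  have pdK1 : pd (jIdx 1) (fun z => -2*α*(z (jIdx 2)) *
          (-(α^2)*(z (jIdx 2))^2 + (z (jIdx 0))^2 + (z (jIdx 1))^2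
            + f (z (xIdx 2)) * (z (jIdx 2))^2 + g (z (xIdx 2)))
        - n (z (xIdx 2)) * z (jIdx 0)
        - ℓ (z (xIdx 2)) * z (xIdx 0) * z (jIdx 2)) z = -2*α*(z (jIdx 2)) * (2 * z (jIdx 1)) := by
    simp (disch := fun_prop) only [pd_add, pd_sub, pd_mul, pd_pow, pd_comp, pd_coord, pd_const]
    simp (config := { decide := true })
    all_goals ring
  have pdK2 : pd (jIdx 2) (fun z => -2*α*(z (jIdx 2)) *
          (-(α^2)*(z (jIdx 2))^2 + (z (jIdx 0))^2 + (z (jIdx 1))^2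
            + f (z (xIdx 2)) * (z (jIdx 2))^2 + g (z (xIdx 2)))
        - n (z (xIdx 2)) * z (jIdx 0)
        - ℓ (z (xIdx 2)) * z (xIdx 0) * z (jIdx 2)) z = -2*α*(-(α^2)*(z (jIdx 2))^2 + (z (jIdx 0))^2 + (z (jIdx 1))^2
        + f (z (xIdx 2))*(z (jIdx 2))^2 + g (z (xIdx 2)))
      + -2*α*(z (jIdx 2)) * (-(α^2)*(2*(z (jIdx 2))) + f (z (xIdx 2))*(2*(z (jIdx 2))))
      - ℓ (z (xIdx 2)) * z (xIdx 0) := by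
    simp (disch := fun_prop) only [pd_add, pd_sub, pd_mul, pd_pow, pd_comp, pd_coord, pd_const]
    simp (config := { decide := true })
    all_goals ring
  have pdK3 : pd (xIdx 0) (fun z => -2*α*(z (jIdx 2)) *
          (-(α^2)*(z (jIdx 2))^2 + (z (jIdx 0))^2 + (z (jIdx 1))^2
            + f (z (xIdx 2)) * (z (jIdx 2))^2 + g (z (xIdx 2)))
        - n (z (xIdx 2)) * z (jIdx 0)
        - ℓ (z (xIdx 2)) * z (xIdx 0) * z (jIdx 2)) z = -(ℓ (z (xIdx 2)) * z (jIdx 2)) := by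
    simp (disch := fun_prop) only [pd_add, pd_sub, pd_mul, pd_pow, pd_comp, pd_coord, pd_const]
    simp (config := { decide := true })
    all_goals ring
  have pdK4 : pd (xIdx 1) (fun z => -2*α*(z (jIdx 2)) *
          (-(α^2)*(z (jIdx 2))^2 + (z (jIdx 0))^2 + (z (jIdx 1))^2
            + f (z (xIdx 2)) * (z (jIdx 2))^2 + g (z (xIdx 2)))
        - n (z (xIdx 2)) * z (jIdx 0)
        - ℓ (z (xIdx 2)) * z (xIdx 0) * z (jIdx 2)) z = 0 := by
    simp (disch := fun_prop) only [pd_add, pd_sub, pd_mul, pd_pow, pd_comp, pd_coord, pd_const]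
    simp (config := { decide := true })
    all_goals ring
  have pdK5 : pd (xIdx 2) (fun z => -2*α*(z (jIdx 2)) *
          (-(α^2)*(z (jIdx 2))^2 + (z (jIdx 0))^2 + (z (jIdx 1))^2
            + f (z (xIdx 2)) * (z (jIdx 2))^2 + g (z (xIdx 2)))
        - n (z (xIdx 2)) * z (jIdx 0)
        - ℓ (z (xIdx 2)) * z (xIdx 0) * z (jIdx 2)) z = -2*α*(z (jIdx 2)) * (deriv f (z (xIdx 2)) * (z (jIdx 2))^2 + deriv g (z (xIdx 2)))
      - deriv n (z (xIdx 2)) * z (jIdx 0) - deriv ℓ (z (xIdx 2)) * z (xIdx 0) * z (jIdx 2) := by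
    simp (disch := fun_prop) only [pd_add, pd_sub, pd_mul, pd_pow, pd_comp, pd_coord, pd_const]
    simp (config := { decide := true })
    all_goals ring
  simp only [e3Bracket, Fin.sum_univ_three]
  simp only [pdH0, pdH1, pdH2, pdH3, pdH4, pdH5, pdK0, pdK1, pdK2, pdK3, pdK4, pdK5]
  simp (config := { decide := true }) only [eps, Prod.mk.injEq, ite_true, ite_false, and_true,
    and_false, true_and, false_and, or_self, or_true, true_or, or_false, false_or, if_true, if_false]
  simp only [hft, hf't, hmt, hm't, hlt, hl't, hgt, hg't]
  refine Eq.trans ?_ hzero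
  simp only [odeRHS]
  field_simp
  ring
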